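/- Let k'/k be a finite extension of fields and let W be a k-subspace of k' with W ≠ {0} and W ≠ k'. Then there exists an intermediate field E of k'/k with E ≠ k' such that: for every commutative k-algebra A and every unit g of the A-algebra k' ⊗_k A, if multiplication by g maps the A-submodule of k' ⊗_k A spanned by {w ⊗ 1 : w ∈ W} into itself, then g lies in the A-submodule of k' ⊗_k A spanned by {x ⊗ 1 : x ∈ E}. -/

import Mathlib

/-!
The field `E` is the stabilizer `{x ∈ k' | x W ⊆ W}`: a subalgebra of a finite extension, hence
a field, and proper because `W` is proper and nonzero. Choosing generators `b₁, …, bₙ` of `W`,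
`E` is the kernel of the `k`-linear map `x ↦ (x bᵢ mod W)ᵢ` into `(k' ⧸ W)ⁿ`. Over a field every
algebra `A` is flat, so this kernel commutes with `A ⊗[k] -`, and `g` lies in the kernel of the
base-changed map precisely because `g (1 ⊗ bᵢ) ∈ A ⊗ W` for each `i`.
-/

open scoped TensorProduct
open TensorProduct

theorem LinearMap.baseChange_mulRight {R B : Type*} [CommSemiring R] [Semiring B] [Algebra R B]
    {A : Type*} [CommSemiring A] [Algebra R A] (c : B) :
    (LinearMap.mulRight R c).baseChange A = LinearMap.mulRight A ((1 : A) ⊗ₜ[R] c) := by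
  ext
  simp

section BaseChange

variable {R : Type*} [CommRing R] (A : Type*) [CommRing A] [Algebra R A]
  {M N : Type*} [AddCommGroup M] [Module R M] [AddCommGroup N] [Module R N]

theorem LinearMap.piRight_baseChange_pi {ι : Type*} [Fintype ι] [DecidableEq ι]
    {P : ι → Type*} [∀ i, AddCommGroup (P i)] [∀ i, Module R (P i)]
    (f : ∀ i, M →ₗ[R] P i) (x : A ⊗[R] M) :
    piRight R A A P ((LinearMap.pi f).baseChange A x) = fun i => (f i).baseChange A x := by
  induction x using TensorProduct.induction_on with
  | zero => rw [map_zero, map_zero]; rfl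
  | tmul a m => ext i; simp
  | add x y hx hy => simp only [map_add, hx, hy]; rfl

theorem LinearMap.baseChange_pi_apply_eq_zero_iff {ι : Type*} [Finite ι]
    {P : ι → Type*} [∀ i, AddCommGroup (P i)] [∀ i, Module R (P i)]
    (f : ∀ i, M →ₗ[R] P i) (x : A ⊗[R] M) :
    (LinearMap.pi f).baseChange A x = 0 ↔ ∀ i, (f i).baseChange A x = 0 := by
  classical
  have := Fintype.ofFinite ι
  rw [← (piRight R A A P).map_eq_zero_iff, piRight_baseChange_pi, funext_iff]
  rfl

theorem Submodule.span_setOf_eq_one_tmul (p : Submodule R M) :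
    span A {z : A ⊗[R] M | ∃ m ∈ p, z = 1 ⊗ₜ[R] m} = p.baseChange A := by
  rw [baseChange_eq_span]
  congr 1
  ext z
  simp [eq_comm]

variable [Module.Flat R A]

theorem Submodule.baseChange_ker (f : M →ₗ[R] N) :
    (LinearMap.ker f).baseChange A = LinearMap.ker (f.baseChange A) :=
  (Module.Flat.ker_lTensor_eq A A f).symm

theorem Submodule.mem_baseChange_iff_mkQ_baseChange_eq_zero (p : Submodule R M)
    (x : A ⊗[R] M) : x ∈ p.baseChange A ↔ p.mkQ.baseChange A x = 0 := by
  rw [← LinearMap.mem_ker, ← baseChange_ker, ker_mkQ]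

end BaseChange

namespace Submodule

variable {R B : Type*} [CommRing R] [Ring B] [Algebra R B] (W : Submodule R B)

def mulStabilizer : Subalgebra R B where
  carrier := {x | ∀ w ∈ W, x * w ∈ W}
  mul_mem' {x y} hx hy w hw := by rw [mul_assoc]; exact hx _ (hy w hw)
  one_mem' w hw := by rwa [one_mul]
  add_mem' {x y} hx hy w hw := by rw [add_mul]; exact W.add_mem (hx w hw) (hy w hw)
  zero_mem' w _ := by rw [zero_mul]; exact W.zero_mem
  algebraMap_mem' c w hw := by rw [← Algebra.smul_def]; exact W.smul_mem c hw

variable {W} in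
theorem mem_mulStabilizer {x : B} : x ∈ W.mulStabilizer ↔ ∀ w ∈ W, x * w ∈ W := Iff.rfl

theorem mulStabilizer_ne_top {K : Type*} [DivisionRing K] [Algebra R K] {W : Submodule R K}
    (hW0 : W ≠ ⊥) (hWtop : W ≠ ⊤) : W.mulStabilizer ≠ ⊤ := by
  obtain ⟨w, hw, hw0⟩ := W.ne_bot_iff.mp hW0
  refine fun h => hWtop (eq_top_iff.mpr fun y _ => ?_)
  simpa [mul_assoc, inv_mul_cancel₀ hw0] using
    mem_mulStabilizer.mp (h ▸ Algebra.mem_top : y * w⁻¹ ∈ W.mulStabilizer) w hw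

def mulRightMkQPi {ι : Type*} (b : ι → B) : B →ₗ[R] (ι → B ⧸ W) :=
  LinearMap.pi fun i => W.mkQ ∘ₗ LinearMap.mulRight R (b i)

theorem ker_mulRightMkQPi {ι : Type*} {b : ι → B} (hb : span R (Set.range b) = W) :
    LinearMap.ker (W.mulRightMkQPi b) = Subalgebra.toSubmodule W.mulStabilizer := by
  ext x
  simp only [mulRightMkQPi, LinearMap.mem_ker, funext_iff, LinearMap.pi_apply,
    LinearMap.comp_apply, LinearMap.mulRight_apply, mkQ_apply, Quotient.mk_eq_zero,
    Pi.zero_apply, Subalgebra.mem_toSubmodule, mem_mulStabilizer]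
  refine ⟨fun h w hw => ?_, fun h i => h _ (hb ▸ subset_span ⟨i, rfl⟩)⟩
  rw [← hb] at hw
  induction hw using span_induction with
  | mem _ hy => obtain ⟨i, rfl⟩ := hy; exact h i
  | zero => simp
  | add _ _ _ _ hy hz => rw [mul_add]; exact W.add_mem hy hz
  | smul c _ _ hy => rw [mul_smul_comm]; exact W.smul_mem c hy

variable {W} in
theorem mem_baseChange_mulStabilizer_of_mul_mem (A : Type*) [CommRing A] [Algebra R A]
    [Module.Flat R A] (hW : W.FG) {g : A ⊗[R] B}
    (hg : ∀ v ∈ W.baseChange A, g * v ∈ W.baseChange A) :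
    g ∈ (Subalgebra.toSubmodule W.mulStabilizer).baseChange A := by
  obtain ⟨s, hs⟩ := hW
  rw [← ker_mulRightMkQPi W (b := ((↑) : s → B)) (by rwa [Subtype.range_coe]),
    baseChange_ker, LinearMap.mem_ker, mulRightMkQPi,
    LinearMap.baseChange_pi_apply_eq_zero_iff]
  intro i
  rw [LinearMap.baseChange_comp, LinearMap.comp_apply, LinearMap.baseChange_mulRight,
    LinearMap.mulRight_apply, ← mem_baseChange_iff_mkQ_baseChange_eq_zero]
  exact hg _ (tmul_mem_baseChange_of_mem 1 (hs ▸ subset_span i.2))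

end Submodule

/-- Let k'/k be a finite extension of fields and W a proper nonzero
k-subspace of k'.  Then there is an intermediate field E ≠ k' such that for every
commutative k-algebra A and every unit g of k' ⊗_k A (written here as A ⊗[k] k'),
if multiplication by g preserves the A-submodule spanned by W, then g lies in the
A-submodule spanned by E. -/
theorem stmt_8 (k k' : Type*) [Field k] [Field k'] [Algebra k k']
    [FiniteDimensional k k'] (W : Submodule k k') (hW0 : W ≠ ⊥) (hWtop : W ≠ ⊤) :
    ∃ E : IntermediateField k k', E ≠ ⊤ ∧
      ∀ (A : Type*) [CommRing A] [Algebra k A], ∀ g : (A ⊗[k] k')ˣ,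
        (∀ v ∈ Submodule.span A {z : A ⊗[k] k' | ∃ w ∈ W, z = 1 ⊗ₜ[k] w},
            (g : A ⊗[k] k') * v ∈
              Submodule.span A {z : A ⊗[k] k' | ∃ w ∈ W, z = 1 ⊗ₜ[k] w}) →
        (g : A ⊗[k] k') ∈
          Submodule.span A {z : A ⊗[k] k' | ∃ e ∈ E, z = 1 ⊗ₜ[k] e} := by
  let E : IntermediateField k k' :=
    W.mulStabilizer.toIntermediateField' (Subalgebra.isField_of_algebraic _)
  refine ⟨E, fun h => W.mulStabilizer_ne_top hW0 hWtop ?_, fun A _ _ g hg => ?_⟩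
  · simpa [E] using congrArg IntermediateField.toSubalgebra h
  rw [Submodule.span_setOf_eq_one_tmul] at hg
  exact (Submodule.span_setOf_eq_one_tmul A (Subalgebra.toSubmodule W.mulStabilizer)).ge
    (Submodule.mem_baseChange_mulStabilizer_of_mul_mem A (IsNoetherian.noetherian W) hg)
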